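/- Let η : (0,∞) → (0,∞) be a measurable function satisfying condition (C) and satisfying either condition (C1) or condition (C2), with ∫_ℝ η(|τ|)/(1+τ²) dτ < ∞. For t > 0 and a > 0 set N_t(a) := ∫_ℝ |∫_0^t e^{−iτs} (sin(sa)/a) ds|² η(|τ|) dτ. Then for every t > 0 there exists a constant D_t^{(2)} > 0 (depending on t and η) such that for every a > 0: N_t(a) ≥ D_t^{(2)} (1/√(1+a²)) ∫_ℝ η(|τ|)/(|τ| + √(1+a²))² dτ. -/

import Mathlib

open MeasureTheory

/-- Condition (C): for every `λ > 0` there is `C_λ > 0` with `η(λτ) ≤ C_λ η(τ)` for `τ > 0`. -/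
def CondC (η : ℝ → ℝ) : Prop :=
  ∀ l : ℝ, 0 < l → ∃ C : ℝ, 0 < C ∧ ∀ τ : ℝ, 0 < τ → η (l * τ) ≤ C * η τ

/-- Condition (C1): `η` is non-increasing on `(0,∞)` and `∫_0^a η(τ)dτ ≤ D_K a η(a)`
for `a ≥ K`. -/
def CondC1 (η : ℝ → ℝ) : Prop :=
  (∀ x y : ℝ, 0 < x → x ≤ y → η y ≤ η x) ∧
  ∀ K : ℝ, 0 < K → ∃ D : ℝ, 0 < D ∧ ∀ a : ℝ, K ≤ a →
    (∫⁻ τ in Set.Ioc (0:ℝ) a, ENNReal.ofReal (η τ)) ≤ ENNReal.ofReal (D * a * η a)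

/-- Condition (C2): `η` is non-decreasing on `(0,∞)` and `∫_a^∞ τ⁻² η(τ)dτ ≤ D_K a⁻¹ η(a)`
for `a ≥ K`. -/
def CondC2 (η : ℝ → ℝ) : Prop :=
  (∀ x y : ℝ, 0 < x → x ≤ y → η x ≤ η y) ∧
  ∀ K : ℝ, 0 < K → ∃ D : ℝ, 0 < D ∧ ∀ a : ℝ, K ≤ a →
    (∫⁻ τ in Set.Ioi a, ENNReal.ofReal (η τ / τ ^ 2)) ≤ ENNReal.ofReal (D * a⁻¹ * η a)

/-!
Both sides are compared with `η(M) / M²`, where `M = √(1 + a²)`. Splitting at `|τ| = M`, the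
monotonicity of `η` together with (C1) or (C2) bounds `∫ η(|τ|) / (|τ| + M)²` by a multiple of
`η(M) / M`. For the lower bound on `N_t(a)` a window of `τ` of length `≍ 1/t` suffices: if
`a ≥ π / (2t)` then for `τ ∈ (a, a + 1/t]` the imaginary part of the inner integral is `≳ t / a` by
Jordan's inequality, and the doubling condition (C) makes `η(τ)` comparable with `η(M)`; if `a` is
small then for `τ ∈ (1/(2t), 1/t]` the real part is `≳ t²`, and `η(τ)`, `η(M)` range over a fixed
compact subset of `(0, ∞)`, where `η` is bounded above and below.
-/

open Real Set
open scoped ENNReal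

noncomputable def sinFourier (t a τ : ℝ) : ℂ :=
  ∫ s in (0:ℝ)..t, Complex.exp (-(τ * Complex.I * s)) * ((Real.sin (s * a) / a : ℝ) : ℂ)

lemma intervalIntegrable_sinFourier_integrand (t a τ : ℝ) :
    IntervalIntegrable (fun s : ℝ => Complex.exp (-(τ * Complex.I * s))
      * ((Real.sin (s * a) / a : ℝ) : ℂ)) volume 0 t :=
  (Continuous.intervalIntegrable (by fun_prop) _ _)

lemma neg_mul_I_mul_eq_ofReal_mul_I (τ s : ℝ) :
    -(τ * Complex.I * s) = ((-(τ * s) : ℝ) : ℂ) * Complex.I := by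
  push_cast
  ring

lemma sinFourier_re (t a τ : ℝ) :
    (sinFourier t a τ).re = (∫ s in (0:ℝ)..t, Real.cos (τ * s) * Real.sin (a * s)) / a := by
  rw [sinFourier, ← Complex.reCLM_apply,
    ← Complex.reCLM.intervalIntegral_comp_comm (intervalIntegrable_sinFourier_integrand t a τ),
    ← intervalIntegral.integral_div]
  congr 1 with s
  rw [Complex.reCLM_apply, Complex.re_mul_ofReal, neg_mul_I_mul_eq_ofReal_mul_I,
    Complex.exp_ofReal_mul_I_re, Real.cos_neg, mul_comm s a, mul_div_assoc]

lemma sinFourier_im (t a τ : ℝ) :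
    (sinFourier t a τ).im = -(∫ s in (0:ℝ)..t, Real.sin (τ * s) * Real.sin (a * s)) / a := by
  rw [sinFourier, ← Complex.imCLM_apply,
    ← Complex.imCLM.intervalIntegral_comp_comm (intervalIntegrable_sinFourier_integrand t a τ),
    ← intervalIntegral.integral_neg, ← intervalIntegral.integral_div]
  congr 1 with s
  rw [Complex.imCLM_apply, Complex.im_mul_ofReal, neg_mul_I_mul_eq_ofReal_mul_I,
    Complex.exp_ofReal_mul_I_im, Real.sin_neg, mul_comm s a]
  ring

lemma integral_cos_mul_left (b t : ℝ) (hb : b ≠ 0) :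
    ∫ s in (0:ℝ)..t, Real.cos (b * s) = Real.sin (b * t) / b := by
  rw [intervalIntegral.integral_comp_mul_left Real.cos hb]
  simp [integral_cos, div_eq_inv_mul]

lemma integral_sin_mul_sin (τ c t : ℝ) (h₁ : τ - c ≠ 0) (h₂ : τ + c ≠ 0) :
    ∫ s in (0:ℝ)..t, Real.sin (τ * s) * Real.sin (c * s)
      = (Real.sin ((τ - c) * t) / (τ - c) - Real.sin ((τ + c) * t) / (τ + c)) / 2 := by
  have hprod (s : ℝ) : Real.sin (τ * s) * Real.sin (c * s)
      = (Real.cos ((τ - c) * s) - Real.cos ((τ + c) * s)) / 2 := by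
    rw [sub_mul, add_mul, Real.cos_sub, Real.cos_add]
    ring
  simp_rw [hprod]
  rw [intervalIntegral.integral_div,
    intervalIntegral.integral_sub (Continuous.intervalIntegrable (by fun_prop) _ _)
      (Continuous.intervalIntegrable (by fun_prop) _ _),
    integral_cos_mul_left _ _ h₁, integral_cos_mul_left _ _ h₂]

lemma le_norm_sinFourier_of_large {t a τ : ℝ} (ht : 0 < t) (ha : π / (2 * t) ≤ a)
    (hτ : τ ∈ Ioc a (a + 1 / t)) :
    t / (2 * π * a) ≤ ‖sinFourier t a τ‖ := by
  obtain ⟨hτa, hτt⟩ := hτ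
  have ha0 : 0 < a := lt_of_lt_of_le (by positivity) ha
  have hπ : π ≤ 2 * a * t := by
    rw [div_le_iff₀ (by positivity)] at ha
    linarith
  have hgap : (τ - a) * t ≤ 1 := by
    have := mul_le_mul_of_nonneg_right (sub_le_iff_le_add'.2 hτt) ht.le
    rwa [one_div_mul_cancel ht.ne'] at this
  have hnear : 2 / π * t ≤ Real.sin ((τ - a) * t) / (τ - a) := by
    rw [le_div_iff₀ (sub_pos.2 hτa), mul_assoc, mul_comm t]
    exact Real.mul_le_sin (by nlinarith) (by linarith [Real.pi_gt_three])
  have hfar : Real.sin ((τ + a) * t) / (τ + a) ≤ t / π := by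
    rw [div_le_div_iff₀ (by linarith) Real.pi_pos]
    nlinarith [mul_le_mul_of_nonneg_right (Real.sin_le_one ((τ + a) * t)) Real.pi_pos.le]
  calc t / (2 * π * a) = (2 / π * t - t / π) / 2 / a := by
        field_simp
        norm_num
    _ ≤ (Real.sin ((τ - a) * t) / (τ - a) - Real.sin ((τ + a) * t) / (τ + a)) / 2 / a := by
        gcongr
    _ = -(sinFourier t a τ).im := by
        rw [sinFourier_im, integral_sin_mul_sin _ _ _ (by linarith) (by linarith)]
        ring
    _ ≤ ‖sinFourier t a τ‖ := (neg_le_abs _).trans (Complex.abs_im_le_norm _)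

lemma le_norm_sinFourier_of_small {t a τ : ℝ} (ht : 0 < t) (ha0 : 0 < a) (ha : a ≤ π / (2 * t))
    (hτ0 : 0 ≤ τ) (hτ : τ ≤ 1 / t) :
    Real.cos 1 / π * t ^ 2 ≤ ‖sinFourier t a τ‖ := by
  have hat : a * t ≤ π / 2 := by
    rwa [le_div_iff₀ (by positivity), mul_comm 2, ← mul_assoc, ← le_div_iff₀ two_pos] at ha
  have hτt : τ * t ≤ 1 := by rwa [le_div_iff₀ ht] at hτ
  have hcos1 : 0 < Real.cos 1 :=
    Real.cos_pos_of_mem_Ioo ⟨by linarith [Real.pi_gt_three], by linarith [Real.pi_gt_three]⟩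
  have hpointwise : ∀ s ∈ Icc (0:ℝ) t,
      Real.cos 1 * (2 / π * a) * s ≤ Real.cos (τ * s) * Real.sin (a * s) := by
    rintro s ⟨hs0, hst⟩
    have hcos : Real.cos 1 ≤ Real.cos (τ * s) :=
      Real.cos_le_cos_of_nonneg_of_le_pi (by positivity) (by linarith [Real.pi_gt_three])
        (by nlinarith)
    have hsin : 2 / π * (a * s) ≤ Real.sin (a * s) :=
      Real.mul_le_sin (by positivity) (by nlinarith)
    calc Real.cos 1 * (2 / π * a) * s = Real.cos 1 * (2 / π * (a * s)) := by ring
      _ ≤ Real.cos (τ * s) * Real.sin (a * s) := mul_le_mul hcos hsin (by positivity) (by linarith)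
  have hintegral : Real.cos 1 * (2 / π * a) * (t ^ 2 / 2)
      ≤ ∫ s in (0:ℝ)..t, Real.cos (τ * s) * Real.sin (a * s) := by
    have hlin : ∫ s in (0:ℝ)..t, Real.cos 1 * (2 / π * a) * s
        = Real.cos 1 * (2 / π * a) * (t ^ 2 / 2) := by
      rw [intervalIntegral.integral_const_mul, integral_id]
      ring
    rw [← hlin]
    exact intervalIntegral.integral_mono_on ht.le (Continuous.intervalIntegrable (by fun_prop) _ _)
      (Continuous.intervalIntegrable (by fun_prop) _ _) hpointwise
  calc Real.cos 1 / π * t ^ 2 = Real.cos 1 * (2 / π * a) * (t ^ 2 / 2) / a := by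
        field_simp
    _ ≤ (sinFourier t a τ).re := by
        rw [sinFourier_re]
        exact div_le_div_of_nonneg_right hintegral ha0.le
    _ ≤ ‖sinFourier t a τ‖ := Complex.re_le_norm _

lemma lintegral_comp_abs (f : ℝ → ℝ≥0∞) :
    ∫⁻ x, f |x| = 2 * ∫⁻ x in Ioi 0, f x := by
  have hIoi : ∫⁻ x in Ioi 0, f |x| = ∫⁻ x in Ioi 0, f x :=
    setLIntegral_congr_fun measurableSet_Ioi fun x hx => by rw [abs_of_pos hx]
  have hIic : ∫⁻ x in Iic 0, f |x| = ∫⁻ x in Ioi 0, f x := by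
    rw [← (Measure.measurePreserving_neg volume).setLIntegral_comp_preimage_emb
      (MeasurableEquiv.neg ℝ).measurableEmbedding, neg_preimage, neg_Iic, neg_zero,
      setLIntegral_congr Ioi_ae_eq_Ici.symm]
    simpa only [abs_neg] using hIoi
  rw [← setLIntegral_univ, ← Iic_union_Ioi (a := 0),
    lintegral_union measurableSet_Ioi (Iic_disjoint_Ioi le_rfl), hIic, hIoi, two_mul]

lemma lintegral_Ioi_inv_sq {M : ℝ} (hM : 0 < M) :
    ∫⁻ τ in Ioi M, ENNReal.ofReal ((τ ^ 2)⁻¹) = ENNReal.ofReal M⁻¹ := by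
  have hrpow : ∀ τ ∈ Ioi M, τ ^ (-2 : ℝ) = (τ ^ 2)⁻¹ := fun τ hτ => by
    rw [Real.rpow_neg (hM.trans hτ).le, Real.rpow_two]
  have hint : IntegrableOn (fun τ : ℝ => (τ ^ 2)⁻¹) (Ioi M) :=
    (integrableOn_Ioi_rpow_of_lt (by norm_num) hM).congr_fun hrpow measurableSet_Ioi
  rw [← ofReal_integral_eq_lintegral_ofReal hint (ae_of_all _ fun τ => by positivity),
    ← setIntegral_congr_fun measurableSet_Ioi hrpow,
    integral_Ioi_rpow_of_lt (by norm_num) hM]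
  norm_num [Real.rpow_neg_one]

section Weight

variable {η : ℝ → ℝ}

lemma CondC1.antitoneOn (h : CondC1 η) : AntitoneOn η (Ioi 0) :=
  fun x hx y _ hxy => h.1 x y hx hxy

lemma CondC2.monotoneOn (h : CondC2 η) : MonotoneOn η (Ioi 0) :=
  fun x hx y _ hxy => h.1 x y hx hxy

lemma CondC1.lintegral_Ioc_div_add_sq_le (h : CondC1 η) (hpos : ∀ τ, 0 < τ → 0 < η τ) :
    ∃ D > 0, ∀ M, 1 ≤ M →
      ∫⁻ τ in Ioc 0 M, ENNReal.ofReal (η τ / (τ + M) ^ 2) ≤ ENNReal.ofReal (D * (η M / M)) := by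
  obtain ⟨D, hD, hbound⟩ := h.2 1 one_pos
  refine ⟨D, hD, fun M hM => ?_⟩
  have hM0 : 0 < M := one_pos.trans_le hM
  calc ∫⁻ τ in Ioc 0 M, ENNReal.ofReal (η τ / (τ + M) ^ 2)
      ≤ ∫⁻ τ in Ioc 0 M, ENNReal.ofReal (η τ) * ENNReal.ofReal ((M ^ 2)⁻¹) := by
        refine setLIntegral_mono' measurableSet_Ioc fun τ hτ => ?_
        rw [← ENNReal.ofReal_mul (hpos τ hτ.1).le, div_eq_mul_inv]
        gcongr
        · exact (hpos τ hτ.1).le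
        · linarith [hτ.1]
    _ = (∫⁻ τ in Ioc 0 M, ENNReal.ofReal (η τ)) * ENNReal.ofReal ((M ^ 2)⁻¹) :=
        lintegral_mul_const' _ _ ENNReal.ofReal_ne_top
    _ ≤ ENNReal.ofReal (D * M * η M) * ENNReal.ofReal ((M ^ 2)⁻¹) := by
        gcongr
        exact hbound M hM
    _ = ENNReal.ofReal (D * (η M / M)) := by
        rw [← ENNReal.ofReal_mul (by have := hpos M hM0; positivity)]
        congr 1
        field_simp

lemma AntitoneOn.lintegral_Ioi_div_add_sq_le (hη : AntitoneOn η (Ioi 0))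
    (hpos : ∀ τ, 0 < τ → 0 < η τ) {M : ℝ} (hM : 0 < M) :
    ∫⁻ τ in Ioi M, ENNReal.ofReal (η τ / (τ + M) ^ 2) ≤ ENNReal.ofReal (η M / M) := by
  calc ∫⁻ τ in Ioi M, ENNReal.ofReal (η τ / (τ + M) ^ 2)
      ≤ ∫⁻ τ in Ioi M, ENNReal.ofReal (η M) * ENNReal.ofReal ((τ ^ 2)⁻¹) := by
        refine setLIntegral_mono' measurableSet_Ioi fun τ (hτ : M < τ) => ?_
        rw [← ENNReal.ofReal_mul (hpos M hM).le, div_eq_mul_inv]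
        exact ENNReal.ofReal_le_ofReal <| mul_le_mul (hη hM (hM.trans hτ) hτ.le)
          (inv_anti₀ (pow_pos (hM.trans hτ) 2) (by nlinarith)) (by positivity) (hpos M hM).le
    _ = ENNReal.ofReal (η M) * ENNReal.ofReal M⁻¹ := by
        rw [lintegral_const_mul' _ _ ENNReal.ofReal_ne_top, lintegral_Ioi_inv_sq hM]
    _ = ENNReal.ofReal (η M / M) := by
        rw [← ENNReal.ofReal_mul (hpos M hM).le, div_eq_mul_inv]

lemma MonotoneOn.lintegral_Ioc_div_add_sq_le (hη : MonotoneOn η (Ioi 0))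
    (hpos : ∀ τ, 0 < τ → 0 < η τ) {M : ℝ} (hM : 0 < M) :
    ∫⁻ τ in Ioc 0 M, ENNReal.ofReal (η τ / (τ + M) ^ 2) ≤ ENNReal.ofReal (η M / M) := by
  calc ∫⁻ τ in Ioc 0 M, ENNReal.ofReal (η τ / (τ + M) ^ 2)
      ≤ ∫⁻ _ in Ioc 0 M, ENNReal.ofReal (η M / M ^ 2) := by
        refine setLIntegral_mono' measurableSet_Ioc fun τ hτ => ?_
        gcongr
        · exact (hpos M hM).le
        · exact hη hτ.1 hM hτ.2
        · linarith [hτ.1]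
    _ = ENNReal.ofReal (η M / M) := by
        rw [setLIntegral_const, Real.volume_Ioc, sub_zero,
          ← ENNReal.ofReal_mul (by have := hpos M hM; positivity)]
        congr 1
        field_simp

lemma CondC2.lintegral_Ioi_div_add_sq_le (h : CondC2 η) (hpos : ∀ τ, 0 < τ → 0 < η τ) :
    ∃ D > 0, ∀ M, 1 ≤ M →
      ∫⁻ τ in Ioi M, ENNReal.ofReal (η τ / (τ + M) ^ 2) ≤ ENNReal.ofReal (D * (η M / M)) := by
  obtain ⟨D, hD, hbound⟩ := h.2 1 one_pos
  refine ⟨D, hD, fun M hM => ?_⟩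
  have hM0 : 0 < M := one_pos.trans_le hM
  calc ∫⁻ τ in Ioi M, ENNReal.ofReal (η τ / (τ + M) ^ 2)
      ≤ ∫⁻ τ in Ioi M, ENNReal.ofReal (η τ / τ ^ 2) := by
        refine setLIntegral_mono' measurableSet_Ioi fun τ (hτ : M < τ) => ?_
        exact ENNReal.ofReal_le_ofReal <| div_le_div_of_nonneg_left (hpos τ (hM0.trans hτ)).le
          (pow_pos (hM0.trans hτ) 2) (by nlinarith)
    _ ≤ ENNReal.ofReal (D * M⁻¹ * η M) := hbound M hM
    _ = ENNReal.ofReal (D * (η M / M)) := by ring_nf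

lemma lintegral_div_abs_add_sq_le (hcond : CondC1 η ∨ CondC2 η)
    (hpos : ∀ τ, 0 < τ → 0 < η τ) :
    ∃ D > 0, ∀ M, 1 ≤ M →
      ∫⁻ τ, ENNReal.ofReal (η |τ| / (|τ| + M) ^ 2) ≤ ENNReal.ofReal (D * (η M / M)) := by
  obtain ⟨D, hD, hpieces⟩ : ∃ D > 0, ∀ M, 1 ≤ M →
      (∫⁻ τ in Ioc 0 M, ENNReal.ofReal (η τ / (τ + M) ^ 2)) ≤ ENNReal.ofReal (D * (η M / M)) ∧
      ∫⁻ τ in Ioi M, ENNReal.ofReal (η τ / (τ + M) ^ 2) ≤ ENNReal.ofReal (D * (η M / M)) := by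
    have hle {D M : ℝ} (hD : 0 < D) (hM : 1 ≤ M) :
        ENNReal.ofReal (D * (η M / M)) ≤ ENNReal.ofReal ((D + 1) * (η M / M)) ∧
        ENNReal.ofReal (η M / M) ≤ ENNReal.ofReal ((D + 1) * (η M / M)) := by
      have : 0 ≤ η M / M := (div_pos (hpos M (by linarith)) (by linarith)).le
      constructor <;> exact ENNReal.ofReal_le_ofReal (by nlinarith)
    rcases hcond with h | h
    · obtain ⟨D, hD, hIoc⟩ := h.lintegral_Ioc_div_add_sq_le hpos
      exact ⟨D + 1, by positivity, fun M hM => ⟨(hIoc M hM).trans (hle hD hM).1,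
        (h.antitoneOn.lintegral_Ioi_div_add_sq_le hpos (by linarith)).trans (hle hD hM).2⟩⟩
    · obtain ⟨D, hD, hIoi⟩ := h.lintegral_Ioi_div_add_sq_le hpos
      exact ⟨D + 1, by positivity, fun M hM =>
        ⟨(h.monotoneOn.lintegral_Ioc_div_add_sq_le hpos (by linarith)).trans (hle hD hM).2,
          (hIoi M hM).trans (hle hD hM).1⟩⟩
  refine ⟨4 * D, by positivity, fun M hM => ?_⟩
  have hx : 0 ≤ D * (η M / M) := by have := hpos M (by linarith); positivity
  calc ∫⁻ τ, ENNReal.ofReal (η |τ| / (|τ| + M) ^ 2)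
      = 2 * ((∫⁻ τ in Ioc 0 M, ENNReal.ofReal (η τ / (τ + M) ^ 2))
          + ∫⁻ τ in Ioi M, ENNReal.ofReal (η τ / (τ + M) ^ 2)) := by
        rw [lintegral_comp_abs (fun τ => ENNReal.ofReal (η τ / (τ + M) ^ 2)),
          ← Ioc_union_Ioi_eq_Ioi (by linarith : (0:ℝ) ≤ M),
          lintegral_union measurableSet_Ioi (Ioc_disjoint_Ioi le_rfl)]
    _ ≤ 2 * (ENNReal.ofReal (D * (η M / M)) + ENNReal.ofReal (D * (η M / M))) := by
        gcongr
        exacts [(hpieces M hM).1, (hpieces M hM).2]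
    _ = ENNReal.ofReal (4 * D * (η M / M)) := by
        rw [← ENNReal.ofReal_add hx hx, ← ENNReal.ofReal_ofNat 2, ← ENNReal.ofReal_mul zero_le_two]
        ring_nf

end Weight

section Comparison

variable {η : ℝ → ℝ}

lemma exists_le_mul_of_mem_Icc (hη : MonotoneOn η (Ioi 0) ∨ AntitoneOn η (Ioi 0))
    (hpos : ∀ τ, 0 < τ → 0 < η τ) {x₀ x₁ : ℝ} (hx₀ : 0 < x₀) :
    ∃ K > 0, ∀ y ∈ Icc x₀ x₁, ∀ z ∈ Icc x₀ x₁, η y ≤ K * η z := by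
  rcases lt_or_ge x₁ x₀ with hempty | hx
  · exact ⟨1, one_pos, fun y hy => absurd (hy.1.trans hy.2) (not_le.2 hempty)⟩
  have hbounds : ∀ y ∈ Icc x₀ x₁, min (η x₀) (η x₁) ≤ η y ∧ η y ≤ max (η x₀) (η x₁) := by
    rintro y ⟨h₀, h₁⟩
    have hy : 0 < y := hx₀.trans_le h₀
    have hx₁ : 0 < x₁ := hy.trans_le h₁
    rcases hη with h | h
    · exact ⟨(min_le_left _ _).trans (h hx₀ hy h₀), (h hy hx₁ h₁).trans (le_max_right _ _)⟩
    · exact ⟨(min_le_right _ _).trans (h hy hx₁ h₁), (h hx₀ hy h₀).trans (le_max_left _ _)⟩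
  have hmin : 0 < min (η x₀) (η x₁) := lt_min (hpos x₀ hx₀) (hpos x₁ (hx₀.trans_le hx))
  have hK : 0 < max (η x₀) (η x₁) / min (η x₀) (η x₁) :=
    div_pos (lt_max_of_lt_left (hpos x₀ hx₀)) hmin
  refine ⟨_, hK, fun y hy z hz => ?_⟩
  calc η y ≤ max (η x₀) (η x₁) := (hbounds y hy).2
    _ = max (η x₀) (η x₁) / min (η x₀) (η x₁) * min (η x₀) (η x₁) := by field_simp
    _ ≤ max (η x₀) (η x₁) / min (η x₀) (η x₁) * η z :=
        mul_le_mul_of_nonneg_left (hbounds z hz).1 hK.le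

lemma CondC.exists_le_mul_of_mem_Icc_two_mul (hC : CondC η)
    (hη : MonotoneOn η (Ioi 0) ∨ AntitoneOn η (Ioi 0)) :
    ∃ K > 0, ∀ x > 0, ∀ y ∈ Icc x (2 * x), ∀ z ∈ Icc x (2 * x), η y ≤ K * η z := by
  rcases hη with h | h
  · obtain ⟨K, hK, hdouble⟩ := hC 2 two_pos
    refine ⟨K, hK, fun x hx y hy z hz => ?_⟩
    calc η y ≤ η (2 * x) := h (hx.trans_le hy.1) (mul_pos two_pos hx) hy.2
      _ ≤ K * η x := hdouble x hx
      _ ≤ K * η z := by gcongr; exact h hx (hx.trans_le hz.1) hz.1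
  · obtain ⟨K, hK, hhalf⟩ := hC (1 / 2) one_half_pos
    refine ⟨K, hK, fun x hx y hy z hz => ?_⟩
    calc η y ≤ η x := h hx (hx.trans_le hy.1) hy.1
      _ = η (1 / 2 * (2 * x)) := by ring_nf
      _ ≤ K * η (2 * x) := hhalf _ (by positivity)
      _ ≤ K * η z := by gcongr; exact h (hx.trans_le hz.1) (mul_pos two_pos hx) hz.2

lemma exists_le_mul_of_mem_Ioc_add_inv (hC : CondC η)
    (hη : MonotoneOn η (Ioi 0) ∨ AntitoneOn η (Ioi 0)) (hpos : ∀ τ, 0 < τ → 0 < η τ)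
    {t : ℝ} (ht : 0 < t) :
    ∃ K > 0, ∀ a, π / (2 * t) ≤ a → ∀ τ ∈ Ioc a (a + 1 / t),
      η (Real.sqrt (1 + a ^ 2)) ≤ K * η τ := by
  obtain ⟨K₁, hK₁, hdouble⟩ := hC.exists_le_mul_of_mem_Icc_two_mul hη
  obtain ⟨K₂, hK₂, hcompact⟩ := exists_le_mul_of_mem_Icc (x₁ := 2) hη hpos
    (by positivity : 0 < π / (2 * t))
  refine ⟨max K₁ K₂, lt_max_of_lt_left hK₁, fun a ha τ ⟨hτa, hτt⟩ => ?_⟩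
  have ha0 : 0 < a := lt_of_lt_of_le (by positivity) ha
  have hinv : 1 / t ≤ a := by
    rw [div_le_iff₀ (by positivity)] at ha
    rw [div_le_iff₀ ht]
    linarith [Real.pi_gt_three]
  have haM : a ≤ Real.sqrt (1 + a ^ 2) := (Real.le_sqrt ha0.le (by positivity)).2 (by linarith)
  have hητ : 0 ≤ η τ := (hpos τ (ha0.trans hτa)).le
  rcases le_or_gt 1 a with h1a | ha1
  · have hM : Real.sqrt (1 + a ^ 2) ≤ 2 * a := (Real.sqrt_le_left (by positivity)).2 (by nlinarith)
    calc η (Real.sqrt (1 + a ^ 2)) ≤ K₁ * η τ :=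
          hdouble a ha0 _ ⟨haM, hM⟩ τ ⟨hτa.le, by linarith⟩
      _ ≤ max K₁ K₂ * η τ := by gcongr; exact le_max_left _ _
  · have hM : Real.sqrt (1 + a ^ 2) ≤ 2 := (Real.sqrt_le_left (by positivity)).2 (by nlinarith)
    have h1M : 1 ≤ Real.sqrt (1 + a ^ 2) := Real.one_le_sqrt.2 (by nlinarith)
    calc η (Real.sqrt (1 + a ^ 2)) ≤ K₂ * η τ :=
          hcompact _ ⟨by linarith, hM⟩ τ ⟨by linarith, by linarith⟩
      _ ≤ max K₁ K₂ * η τ := by gcongr; exact le_max_right _ _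

end Comparison

noncomputable def hyperbolicN (η : ℝ → ℝ) (t a : ℝ) : ℝ≥0∞ :=
  ∫⁻ τ, ENNReal.ofReal (‖sinFourier t a τ‖ ^ 2 * η |τ|)

lemma ofReal_mul_measure_le_lintegral {α : Type*} [MeasurableSpace α] {μ : Measure α}
    {s : Set α} (hs : MeasurableSet s) {c : ℝ} {g : α → ℝ} (h : ∀ x ∈ s, c ≤ g x) :
    ENNReal.ofReal c * μ s ≤ ∫⁻ x, ENNReal.ofReal (g x) ∂μ :=
  calc ENNReal.ofReal c * μ s = ∫⁻ _ in s, ENNReal.ofReal c ∂μ := (setLIntegral_const _ _).symm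
    _ ≤ ∫⁻ x in s, ENNReal.ofReal (g x) ∂μ :=
        setLIntegral_mono' hs fun x hx => ENNReal.ofReal_le_ofReal (h x hx)
    _ ≤ ∫⁻ x, ENNReal.ofReal (g x) ∂μ := setLIntegral_le_lintegral _ _

section LowerBound

variable {η : ℝ → ℝ}

lemma exists_le_hyperbolicN_of_large (hC : CondC η)
    (hη : MonotoneOn η (Ioi 0) ∨ AntitoneOn η (Ioi 0)) (hpos : ∀ τ, 0 < τ → 0 < η τ)
    {t : ℝ} (ht : 0 < t) :
    ∃ c > 0, ∀ a, π / (2 * t) ≤ a →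
      ENNReal.ofReal (c * (η (Real.sqrt (1 + a ^ 2)) / (1 + a ^ 2))) ≤ hyperbolicN η t a := by
  obtain ⟨K, hK, hwindow⟩ := exists_le_mul_of_mem_Ioc_add_inv hC hη hpos ht
  refine ⟨t / (4 * π ^ 2 * K), by positivity, fun a ha => ?_⟩
  have ha0 : 0 < a := lt_of_lt_of_le (by positivity) ha
  have hηM : 0 < η (Real.sqrt (1 + a ^ 2)) := hpos _ (by positivity)
  calc ENNReal.ofReal (t / (4 * π ^ 2 * K) * (η (Real.sqrt (1 + a ^ 2)) / (1 + a ^ 2)))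
      ≤ ENNReal.ofReal ((t / (2 * π * a)) ^ 2 * (η (Real.sqrt (1 + a ^ 2)) / K))
          * volume (Ioc a (a + 1 / t)) := by
        rw [Real.volume_Ioc, add_sub_cancel_left, ← ENNReal.ofReal_mul (by positivity)]
        refine ENNReal.ofReal_le_ofReal ?_
        calc t / (4 * π ^ 2 * K) * (η (Real.sqrt (1 + a ^ 2)) / (1 + a ^ 2))
            = t * η (Real.sqrt (1 + a ^ 2)) / (4 * π ^ 2 * K) / (1 + a ^ 2) := by ring
          _ ≤ t * η (Real.sqrt (1 + a ^ 2)) / (4 * π ^ 2 * K) / a ^ 2 :=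
            div_le_div_of_nonneg_left (by positivity) (by positivity) (by linarith)
          _ = (t / (2 * π * a)) ^ 2 * (η (Real.sqrt (1 + a ^ 2)) / K) * (1 / t) := by
            field_simp
            ring
    _ ≤ hyperbolicN η t a := by
        refine ofReal_mul_measure_le_lintegral measurableSet_Ioc fun τ hτ => ?_
        rw [abs_of_pos (ha0.trans hτ.1)]
        exact mul_le_mul (pow_le_pow_left₀ (by positivity) (le_norm_sinFourier_of_large ht ha hτ) 2)
          ((div_le_iff₀' hK).2 (hwindow a ha τ hτ)) (by positivity) (by positivity)

lemma exists_le_hyperbolicN_of_small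
    (hη : MonotoneOn η (Ioi 0) ∨ AntitoneOn η (Ioi 0)) (hpos : ∀ τ, 0 < τ → 0 < η τ)
    {t : ℝ} (ht : 0 < t) :
    ∃ c > 0, ∀ a, 0 < a → a ≤ π / (2 * t) →
      ENNReal.ofReal (c * (η (Real.sqrt (1 + a ^ 2)) / (1 + a ^ 2))) ≤ hyperbolicN η t a := by
  obtain ⟨K, hK, hcompact⟩ := exists_le_mul_of_mem_Icc (x₁ := max (1 / t) (1 + π / (2 * t)))
    hη hpos (by positivity : 0 < min (1 / (2 * t)) 1)
  have hcos1 : 0 < Real.cos 1 :=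
    Real.cos_pos_of_mem_Ioo ⟨by linarith [Real.pi_gt_three], by linarith [Real.pi_gt_three]⟩
  set m := Real.cos 1 / π * t ^ 2
  refine ⟨m ^ 2 / (2 * t * K), by positivity, fun a ha0 ha => ?_⟩
  have hM1 : 1 ≤ Real.sqrt (1 + a ^ 2) := Real.one_le_sqrt.2 (by nlinarith)
  have hM : Real.sqrt (1 + a ^ 2) ≤ 1 + π / (2 * t) :=
    (Real.sqrt_le_left (by positivity)).2 (by nlinarith)
  have hηM : 0 < η (Real.sqrt (1 + a ^ 2)) := hpos _ (by positivity)
  calc ENNReal.ofReal (m ^ 2 / (2 * t * K) * (η (Real.sqrt (1 + a ^ 2)) / (1 + a ^ 2)))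
      ≤ ENNReal.ofReal (m ^ 2 * (η (Real.sqrt (1 + a ^ 2)) / K))
          * volume (Ioc (1 / (2 * t)) (1 / t)) := by
        rw [Real.volume_Ioc, ← ENNReal.ofReal_mul (by positivity)]
        refine ENNReal.ofReal_le_ofReal ?_
        calc m ^ 2 / (2 * t * K) * (η (Real.sqrt (1 + a ^ 2)) / (1 + a ^ 2))
            = m ^ 2 * η (Real.sqrt (1 + a ^ 2)) / (2 * t * K) / (1 + a ^ 2) := by ring
          _ ≤ m ^ 2 * η (Real.sqrt (1 + a ^ 2)) / (2 * t * K) :=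
            div_le_self (by positivity) (by nlinarith)
          _ = m ^ 2 * (η (Real.sqrt (1 + a ^ 2)) / K) * (1 / t - 1 / (2 * t)) := by
            field_simp
            ring
    _ ≤ hyperbolicN η t a := by
        refine ofReal_mul_measure_le_lintegral measurableSet_Ioc fun τ hτ => ?_
        have hτ0 : 0 < τ := lt_trans (by positivity) hτ.1
        rw [abs_of_pos hτ0]
        have hcompare : η (Real.sqrt (1 + a ^ 2)) ≤ K * η τ :=
          hcompact _ ⟨(min_le_right _ _).trans hM1, hM.trans (le_max_right _ _)⟩
            τ ⟨(min_le_left _ _).trans hτ.1.le, hτ.2.trans (le_max_left _ _)⟩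
        exact mul_le_mul (pow_le_pow_left₀ (by positivity)
            (le_norm_sinFourier_of_small ht ha0 ha hτ0.le hτ.2) 2)
          ((div_le_iff₀' hK).2 hcompare) (by positivity) (by positivity)

lemma exists_le_hyperbolicN (hC : CondC η)
    (hη : MonotoneOn η (Ioi 0) ∨ AntitoneOn η (Ioi 0)) (hpos : ∀ τ, 0 < τ → 0 < η τ)
    {t : ℝ} (ht : 0 < t) :
    ∃ c > 0, ∀ a, 0 < a →
      ENNReal.ofReal (c * (η (Real.sqrt (1 + a ^ 2)) / (1 + a ^ 2))) ≤ hyperbolicN η t a := by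
  obtain ⟨c₁, hc₁, hlarge⟩ := exists_le_hyperbolicN_of_large hC hη hpos ht
  obtain ⟨c₂, hc₂, hsmall⟩ := exists_le_hyperbolicN_of_small hη hpos ht
  refine ⟨min c₁ c₂, lt_min hc₁ hc₂, fun a ha0 => ?_⟩
  have hx : 0 ≤ η (Real.sqrt (1 + a ^ 2)) / (1 + a ^ 2) :=
    div_nonneg (hpos _ (by positivity)).le (by positivity)
  rcases le_or_gt (π / (2 * t)) a with ha | ha
  · exact (ENNReal.ofReal_le_ofReal (by gcongr; exact min_le_left _ _)).trans (hlarge a ha)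
  · exact (ENNReal.ofReal_le_ofReal (by gcongr; exact min_le_right _ _)).trans
      (hsmall a ha0 ha.le)

end LowerBound

theorem stmt_11_general (η : ℝ → ℝ)
    (hpos : ∀ τ : ℝ, 0 < τ → 0 < η τ)
    (hC : CondC η) (hcond : CondC1 η ∨ CondC2 η) :
    ∀ t : ℝ, 0 < t → ∃ D : ℝ, 0 < D ∧ ∀ a : ℝ, 0 < a →
      ENNReal.ofReal (D * (1 / Real.sqrt (1 + a ^ 2))) *
          (∫⁻ τ : ℝ, ENNReal.ofReal (η |τ| / (|τ| + Real.sqrt (1 + a ^ 2)) ^ 2))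
        ≤ ∫⁻ τ : ℝ, ENNReal.ofReal
            (‖∫ s in (0:ℝ)..t, Complex.exp (-(τ * Complex.I * s))
                * ((Real.sin (s * a) / a : ℝ) : ℂ)‖ ^ 2 * η |τ|) := by
  intro t ht
  obtain ⟨C, hC₀, hweight⟩ := lintegral_div_abs_add_sq_le hcond hpos
  obtain ⟨c, hc, hlower⟩ := exists_le_hyperbolicN hC
    (hcond.symm.imp CondC2.monotoneOn CondC1.antitoneOn) hpos ht
  refine ⟨c / C, by positivity, fun a ha => ?_⟩
  set M := Real.sqrt (1 + a ^ 2)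
  have hM1 : 1 ≤ M := Real.one_le_sqrt.2 (by nlinarith)
  have hM2 : M ^ 2 = 1 + a ^ 2 := Real.sq_sqrt (by positivity)
  calc ENNReal.ofReal (c / C * (1 / M)) * ∫⁻ τ, ENNReal.ofReal (η |τ| / (|τ| + M) ^ 2)
      ≤ ENNReal.ofReal (c / C * (1 / M)) * ENNReal.ofReal (C * (η M / M)) := by
        gcongr
        exact hweight M hM1
    _ = ENNReal.ofReal (c * (η M / (1 + a ^ 2))) := by
        rw [← ENNReal.ofReal_mul (by positivity), ← hM2]
        congr 1
        field_simp
    _ ≤ hyperbolicN η t a := hlower a ha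

/-- Lemma 6.6: lower bound `N_t(a) ≥ D_t (1/√(1+a²)) ∫ η(|τ|)/(|τ|+√(1+a²))² dτ`. -/
theorem stmt_11 (η : ℝ → ℝ)
    (hmeas : Measurable η) (hpos : ∀ τ : ℝ, 0 < τ → 0 < η τ)
    (hC : CondC η) (hcond : CondC1 η ∨ CondC2 η)
    (hint : Integrable (fun τ : ℝ => η |τ| / (1 + τ ^ 2))) :
    ∀ t : ℝ, 0 < t → ∃ D : ℝ, 0 < D ∧ ∀ a : ℝ, 0 < a →
      ENNReal.ofReal (D * (1 / Real.sqrt (1 + a ^ 2))) *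
          (∫⁻ τ : ℝ, ENNReal.ofReal (η |τ| / (|τ| + Real.sqrt (1 + a ^ 2)) ^ 2))
        ≤ ∫⁻ τ : ℝ, ENNReal.ofReal
            (‖∫ s in (0:ℝ)..t, Complex.exp (-(τ * Complex.I * s))
                * ((Real.sin (s * a) / a : ℝ) : ℂ)‖ ^ 2 * η |τ|) :=
  stmt_11_general η hpos hC hcond
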